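/- arXiv:1512.05279 — 4 statements merged into one kernel-verified Lean document; each statement's English description precedes it below -/
import Mathlib

section
/- The number of distinct sign vectors σ ∈ {−1, 0, +1}^m of the form σ(i) = sign(f_i(x)), ranging over all points x ∈ ℝ^d, where f_1, …, f_m are affine functions on ℝ^d, is at most ∑_{k=0}^{d} (m choose d−k) · ∑_{j=0}^{k} (m−d+k choose j); in particular it is O(m^d) for fixed d. -/
/-!
Deletion–restriction on the last function `g`. Forgetting the last coordinate maps the sign
vectors of `f₁, …, f_{m+1}` onto those of `f₁, …, f_m`. Two points with the same signs for
`f₁, …, f_m` but different signs of `g` are joined by a segment that meets the hyperplane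
`g = 0`, and every `fᵢ` keeps its sign along it; so a fibre has more than one element only over
a sign vector realized on that hyperplane, an affine space of dimension `d - 1` (if `g` is
constant, all fibres are singletons). Fibres have at most three elements, so the maximal number
`N(m, d)` of sign vectors of `m` affine functions on `ℝ^d` satisfies
`N(m+1, d) ≤ N(m, d) + 2 N(m, d-1)`, whence `N(m, d) ≤ ∑_{k ≤ d} 2^k C(m, k)`. This sum equals
`∑_{i ≤ d} C(m, i) ∑_{j ≤ d-i} C(m-i, j)` (both count pairs of disjoint subsets of `[m]` of
total size at most `d`), and after substituting `i = d - k` it is termwise at most the claimed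
sum.
-/

open Finset

def signVectorBound (m d : ℕ) : ℕ :=
  ∑ k ∈ range (d + 1), 2 ^ k * m.choose k

theorem signVectorBound_zero_left (d : ℕ) : signVectorBound 0 d = 1 := by
  simp [signVectorBound, sum_range_succ', Nat.choose_zero_succ]

theorem signVectorBound_mono_left {m m' : ℕ} (h : m ≤ m') (d : ℕ) :
    signVectorBound m d ≤ signVectorBound m' d :=
  sum_le_sum fun k _ => Nat.mul_le_mul_left _ (Nat.choose_le_choose k h)

theorem signVectorBound_succ_succ (m d : ℕ) :
    signVectorBound (m + 1) (d + 1) = signVectorBound m (d + 1) + 2 * signVectorBound m d := by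
  simp only [signVectorBound]
  rw [sum_range_succ' _ (d + 1), sum_range_succ' _ (d + 1)]
  simp only [Nat.choose_succ_succ, Nat.choose_zero_right, mul_add, sum_add_distrib, mul_sum,
    pow_succ', mul_assoc]
  ring

theorem sum_choose_mul_sum_choose_eq_signVectorBound (m d : ℕ) :
    ∑ i ∈ range (d + 1), m.choose i * ∑ j ∈ range (d + 1 - i), (m - i).choose j =
      signVectorBound m d := by
  simp only [mul_sum]
  rw [← sum_range_diag_flip, signVectorBound]
  refine sum_congr rfl fun n _ => ?_
  calc ∑ i ∈ range (n + 1), m.choose i * (m - i).choose (n - i)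
      = ∑ i ∈ range (n + 1), m.choose n * n.choose i := by
        refine sum_congr rfl fun i hi => ?_
        have hin : i ≤ n := Nat.lt_succ_iff.mp (mem_range.mp hi)
        rcases le_or_gt n m with hnm | hmn
        · exact (Nat.choose_mul hin).symm
        · rw [Nat.choose_eq_zero_of_lt hmn, zero_mul]
          rcases le_or_gt i m with him | hmi
          · rw [Nat.choose_eq_zero_of_lt (by omega : m - i < n - i), mul_zero]
          · rw [Nat.choose_eq_zero_of_lt hmi, zero_mul]
    _ = 2 ^ n * m.choose n := by rw [← mul_sum, Nat.sum_range_choose, mul_comm]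

theorem signVectorBound_le (m d : ℕ) :
    signVectorBound m d ≤
      ∑ k ∈ range (d + 1), m.choose (d - k) * ∑ j ∈ range (k + 1), (m - d + k).choose j := by
  rw [← sum_choose_mul_sum_choose_eq_signVectorBound, ← sum_range_reflect]
  refine sum_le_sum fun k hk => ?_
  have hk : k ≤ d := Nat.lt_succ_iff.mp (mem_range.mp hk)
  rw [show d + 1 - 1 - k = d - k by omega, show d + 1 - (d - k) = k + 1 by omega]
  exact Nat.mul_le_mul_left _ (sum_le_sum fun j _ => Nat.choose_le_choose j (by omega))

theorem Real.sign_eq_neg_one_iff {r : ℝ} : r.sign = -1 ↔ r < 0 := by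
  refine ⟨fun h => ?_, Real.sign_of_neg⟩
  rcases lt_trichotomy r 0 with hr | rfl | hr
  · exact hr
  · norm_num [Real.sign_zero] at h
  · norm_num [Real.sign_of_pos hr] at h

theorem Real.sign_eq_one_iff {r : ℝ} : r.sign = 1 ↔ 0 < r := by
  simpa [Real.sign_neg] using Real.sign_eq_neg_one_iff (r := -r)

theorem Real.zero_mem_uIcc_of_sign_ne {a b : ℝ} (h : a.sign ≠ b.sign) : (0 : ℝ) ∈ Set.uIcc a b := by
  contrapose! h
  rw [Set.mem_uIcc] at h
  rcases lt_or_ge a 0 with ha | ha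
  · rw [Real.sign_of_neg ha, Real.sign_of_neg (by by_contra! hb; exact h (Or.inl ⟨ha.le, hb⟩))]
  · have hb : 0 < b := by by_contra! hb; exact h (Or.inr ⟨hb, ha⟩)
    rw [Real.sign_of_pos hb, Real.sign_of_pos (by by_contra! ha'; exact h (Or.inl ⟨ha', hb.le⟩))]

theorem Real.sign_eq_of_mem_uIcc {a b c : ℝ} (h : a.sign = b.sign) (hc : c ∈ Set.uIcc a b) :
    c.sign = a.sign := by
  rw [Set.mem_uIcc] at hc
  rcases Real.sign_apply_eq a with ha | ha | ha <;> rw [ha] at h ⊢ <;> symm at h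
  · rw [Real.sign_eq_neg_one_iff] at ha h ⊢
    rcases hc with hc | hc <;> linarith [hc.1, hc.2]
  · rw [Real.sign_eq_zero_iff] at ha h ⊢
    rcases hc with hc | hc <;> linarith [hc.1, hc.2]
  · rw [Real.sign_eq_one_iff] at ha h ⊢
    rcases hc with hc | hc <;> linarith [hc.1, hc.2]

theorem ncard_add_ncard_le_of_injOn_init {α : Type*} {n : ℕ} {A : Set (Fin (n + 1) → α)}
    {B C : Set (Fin n → α)} {T : Set α} (hB : B.Finite) (hT : T.Finite) (hCB : C ⊆ B)
    (hAB : ∀ σ ∈ A, Fin.init σ ∈ B) (hAT : ∀ σ ∈ A, σ (Fin.last n) ∈ T)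
    (hinj : Set.InjOn Fin.init (A \ Fin.init ⁻¹' C)) :
    A.ncard + C.ncard ≤ B.ncard + T.ncard * C.ncard := by
  have hC : C.Finite := hB.subset hCB
  have hfree : (A \ Fin.init ⁻¹' C).ncard ≤ B.ncard - C.ncard := by
    rw [← Set.ncard_sdiff hCB hC]
    exact Set.ncard_le_ncard_of_injOn _ (fun σ hσ => ⟨hAB σ hσ.1, hσ.2⟩) hinj hB.sdiff
  have hsplit : (A ∩ Fin.init ⁻¹' C).ncard ≤ T.ncard * C.ncard := by
    rw [← Set.ncard_prod]
    exact Set.ncard_le_ncard_of_injOn (Fin.snocEquiv fun _ => α).symm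
      (fun σ hσ => ⟨hAT σ hσ.1, hσ.2⟩) (Fin.snocEquiv _).symm.injective.injOn (hT.prod hC)
  have := Set.ncard_le_ncard hCB hB
  have hunion := Set.ncard_union_le (A ∩ Fin.init ⁻¹' C) (A \ Fin.init ⁻¹' C)
  rw [Set.inter_union_sdiff] at hunion
  omega

section SignVectors

variable {ι V W : Type*} [AddCommGroup V] [Module ℝ V] [AddCommGroup W] [Module ℝ W]

noncomputable def signVector (f : ι → V →ᵃ[ℝ] ℝ) (x : V) : ι → ℝ := fun i => (f i x).sign

theorem finite_range_signVector [Finite ι] (f : ι → V →ᵃ[ℝ] ℝ) :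
    (Set.range (signVector f)).Finite :=
  (Set.Finite.pi fun _ => Set.toFinite ({-1, 0, 1} : Set ℝ)).subset <| by
    rintro _ ⟨x, rfl⟩ i -
    exact Real.sign_apply_eq _

theorem exists_apply_eq_zero_signVector_eq {f : ι → V →ᵃ[ℝ] ℝ} {g : V →ᵃ[ℝ] ℝ} {x y : V}
    (hf : signVector f x = signVector f y) (hg : (g x).sign ≠ (g y).sign) :
    ∃ z, g z = 0 ∧ signVector f z = signVector f x := by
  obtain ⟨z, hz, hgz⟩ : (0 : ℝ) ∈ g '' segment ℝ x y := by
    rw [image_segment, segment_eq_uIcc]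
    exact Real.zero_mem_uIcc_of_sign_ne hg
  refine ⟨z, hgz, funext fun i => Real.sign_eq_of_mem_uIcc (congrFun hf i) ?_⟩
  rw [← segment_eq_uIcc, ← image_segment]
  exact Set.mem_image_of_mem _ hz

theorem ncard_range_signVector_le_of_linear_eq_zero {m : ℕ} (f : Fin (m + 1) → V →ᵃ[ℝ] ℝ)
    (hf : (f (Fin.last m)).linear = 0) :
    (Set.range (signVector f)).ncard ≤ (Set.range (signVector (Fin.init f))).ncard := by
  refine Set.ncard_le_ncard_of_injOn Fin.init (by rintro _ ⟨x, rfl⟩; exact ⟨x, rfl⟩) ?_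
    (finite_range_signVector _)
  rintro _ ⟨x, rfl⟩ _ ⟨y, rfl⟩ hxy
  have hlast : f (Fin.last m) x = f (Fin.last m) y := by
    refine sub_eq_zero.1 ?_
    simpa [hf] using ((f (Fin.last m)).linearMap_vsub x y).symm
  exact (Fin.snocEquiv _).symm.injective (Prod.ext (congrArg Real.sign hlast) hxy)

theorem ncard_range_signVector_le_add {m : ℕ} (f : Fin (m + 1) → V →ᵃ[ℝ] ℝ) (E : W →ᵃ[ℝ] V)
    (hE : {z | f (Fin.last m) z = 0} ⊆ Set.range E) :
    (Set.range (signVector f)).ncard ≤ (Set.range (signVector (Fin.init f))).ncard +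
      2 * (Set.range (signVector fun i => (Fin.init f i).comp E)).ncard := by
  have hsigns : ({-1, 0, 1} : Set ℝ).ncard = 3 :=
    Set.ncard_eq_three.2 ⟨-1, 0, 1, by norm_num, by norm_num, by norm_num, rfl⟩
  have key := ncard_add_ncard_le_of_injOn_init (A := Set.range (signVector f))
    (C := Set.range (signVector fun i => (Fin.init f i).comp E)) (T := {-1, 0, 1})
    (finite_range_signVector _) (Set.toFinite _)
    (by rintro _ ⟨w, rfl⟩; exact ⟨E w, rfl⟩) (by rintro _ ⟨x, rfl⟩; exact ⟨x, rfl⟩)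
    (by rintro _ ⟨x, rfl⟩; exact Real.sign_apply_eq _) ?_
  · rw [hsigns] at key
    omega
  rintro _ ⟨⟨x, rfl⟩, hx⟩ _ ⟨⟨y, rfl⟩, -⟩ hxy
  refine (Fin.snocEquiv _).symm.injective (Prod.ext ?_ hxy)
  by_contra hne
  obtain ⟨z, hz, hzx⟩ := exists_apply_eq_zero_signVector_eq hxy hne
  obtain ⟨w, rfl⟩ := hE hz
  exact hx ⟨w, hzx⟩

theorem AffineMap.exists_setOf_eq_zero_subset_range {g : V →ᵃ[ℝ] ℝ} (hg : g.linear ≠ 0) :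
    ∃ E : LinearMap.ker g.linear →ᵃ[ℝ] V, {z | g z = 0} ⊆ Set.range E := by
  obtain ⟨x₀, hx₀⟩ := g.linear_surjective_iff.1 (LinearMap.surjective_of_ne_zero hg) 0
  refine ⟨(AffineEquiv.vaddConst ℝ x₀).toAffineMap.comp
    (LinearMap.ker g.linear).subtype.toAffineMap, fun z hz => ⟨⟨z - x₀, ?_⟩, ?_⟩⟩
  · rw [LinearMap.mem_ker, ← vsub_eq_sub, g.linearMap_vsub, hz, hx₀, vsub_self]
  · simp

theorem ncard_range_signVector_le [FiniteDimensional ℝ V] {m : ℕ} (f : Fin m → V →ᵃ[ℝ] ℝ) :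
    (Set.range (signVector f)).ncard ≤ signVectorBound m (Module.finrank ℝ V) := by
  induction m generalizing V with
  | zero =>
    rw [signVectorBound_zero_left]
    exact Set.ncard_le_one_of_subsingleton _
  | succ m ih =>
    by_cases hg : (f (Fin.last m)).linear = 0
    · calc _ ≤ _ := ncard_range_signVector_le_of_linear_eq_zero f hg
        _ ≤ _ := ih _
        _ ≤ _ := signVectorBound_mono_left m.le_succ _
    · obtain ⟨E, hE⟩ := (f (Fin.last m)).exists_setOf_eq_zero_subset_range hg
      have hdim := Module.Dual.finrank_ker_add_one_of_ne_zero hg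
      calc _ ≤ _ := ncard_range_signVector_le_add f E hE
        _ ≤ signVectorBound m (Module.finrank ℝ (LinearMap.ker (f (Fin.last m)).linear) + 1) +
              2 * signVectorBound m (Module.finrank ℝ (LinearMap.ker (f (Fin.last m)).linear)) :=
            add_le_add (hdim ▸ ih _) (Nat.mul_le_mul_left 2 (ih _))
        _ = _ := by rw [← signVectorBound_succ_succ, hdim]

end SignVectors

open Finset in
/-- The number of sign vectors realized by `m` affine functions on `ℝ^d` is at most
`∑_{k=0}^{d} C(m, d-k) · ∑_{j=0}^{k} C(m-d+k, j)` (Buck's bound on the number of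
faces of an arrangement of `m` hyperplanes in `ℝ^d`). -/
theorem sign_vectors_of_affine_bound (m d : ℕ)
    (f : Fin m → ((Fin d → ℝ) →ᵃ[ℝ] ℝ)) :
    Set.ncard {σ : Fin m → ℝ | ∃ x : Fin d → ℝ, ∀ i, σ i = Real.sign (f i x)} ≤
      ∑ k ∈ Finset.range (d + 1), (m.choose (d - k)) *
        ∑ j ∈ Finset.range (k + 1), ((m - d + k).choose j) := by
  have hset : {σ : Fin m → ℝ | ∃ x : Fin d → ℝ, ∀ i, σ i = Real.sign (f i x)} =
      Set.range (signVector f) := by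
    ext σ
    simp only [Set.mem_range, funext_iff, signVector, eq_comm]
    rfl
  calc _ ≤ signVectorBound m (Module.finrank ℝ (Fin d → ℝ)) := hset ▸ ncard_range_signVector_le f
    _ = signVectorBound m d := by rw [Module.finrank_fin_fun]
    _ ≤ _ := signVectorBound_le m d
end

section
/- Consider the two-pointer staircase search in an n × n real matrix M with strictly increasing rows and columns: starting at (lo, hi) = (0, n−1), repeatedly move to (lo+1, hi) if M(lo, hi) < x and to (lo, hi−1) if M(lo, hi) ≥ x, until lo = n or hi = −1 (treating the case M(lo,hi) = x as reporting x and then decrementing hi). Then the search visits a cell with value x if and only if x occurs somewhere in M. -/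
/-!
While the search has not hit `x`, every cell `(i, j)` with `M i j = x` stays in the unsearched
region: rows at or below `lo`, columns at or left of `hi`. Indeed, moving down from row `lo = i`
would need `M i hi < x ≤ M i hi`, and moving left from column `hi = j` would need
`x < M lo j ≤ x`. But `lo - hi` grows by one at each step and is bounded while that region is
non-empty, so the search must hit `x`.
-/

namespace StaircaseSearch

variable {α : Type*} [LinearOrder α] {m n : ℕ} (M : Fin m → Fin n → α) (x : α)

def Hits (c : ℕ × ℤ) : Prop :=
  ∃ (h1 : c.1 < m) (h3 : c.2.toNat < n), 0 ≤ c.2 ∧ M ⟨c.1, h1⟩ ⟨c.2.toNat, h3⟩ = x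

def InSearchRegion (c : ℕ × ℤ) (i : Fin m) (j : Fin n) : Prop :=
  c.1 ≤ i ∧ (j : ℤ) ≤ c.2 ∧ c.2 < n

variable {M x} (p : ℕ → ℕ × ℤ)
  (hstep : ∀ t, (h1 : (p t).1 < m) → 0 ≤ (p t).2 → (h3 : (p t).2.toNat < n) →
    p (t + 1) =
      if M ⟨(p t).1, h1⟩ ⟨(p t).2.toNat, h3⟩ < x
      then ((p t).1 + 1, (p t).2)
      else ((p t).1, (p t).2 - 1))
include hstep

theorem fst_sub_snd_succ {t : ℕ} (h1 : (p t).1 < m) (h0 : 0 ≤ (p t).2)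
    (h3 : (p t).2.toNat < n) :
    ((p (t + 1)).1 : ℤ) - (p (t + 1)).2 = (p t).1 - (p t).2 + 1 := by
  rw [hstep t h1 h0 h3]
  split_ifs <;> push_cast <;> ring

theorem inSearchRegion_succ (hrow : ∀ i, Monotone (M i))
    (hcol : ∀ j, Monotone fun i => M i j) {i : Fin m} {j : Fin n} (hij : M i j = x) {t : ℕ}
    (hreg : InSearchRegion (p t) i j) (hmiss : ¬ Hits M x (p t)) :
    InSearchRegion (p (t + 1)) i j := by
  obtain ⟨hlo, hhi, hhi_lt⟩ := hreg
  have h1 : (p t).1 < m := hlo.trans_lt i.isLt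
  have h0 : 0 ≤ (p t).2 := le_trans (Int.natCast_nonneg _) hhi
  have h3 : (p t).2.toNat < n := by omega
  have hne : M ⟨(p t).1, h1⟩ ⟨(p t).2.toNat, h3⟩ ≠ x := fun h => hmiss ⟨h1, h3, h0, h⟩
  rw [InSearchRegion, hstep t h1 h0 h3]
  split_ifs with hlt
  · have hlo_ne : (p t).1 ≠ i := by
      intro h
      have hji : j ≤ ⟨(p t).2.toNat, h3⟩ := show (j : ℕ) ≤ (p t).2.toNat by omega
      rw [show (⟨(p t).1, h1⟩ : Fin m) = i from Fin.ext h, ← hij] at hlt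
      exact (hrow i hji).not_gt hlt
    exact ⟨by simpa using lt_of_le_of_ne hlo hlo_ne, hhi, hhi_lt⟩
  · have hgt : x < M ⟨(p t).1, h1⟩ ⟨(p t).2.toNat, h3⟩ :=
      lt_of_le_of_ne (not_lt.mp hlt) (Ne.symm hne)
    have hhi_ne : (j : ℕ) ≠ (p t).2.toNat := by
      intro h
      have hli : (⟨(p t).1, h1⟩ : Fin m) ≤ i := hlo
      rw [show (⟨(p t).2.toNat, h3⟩ : Fin n) = j from Fin.ext h.symm, ← hij] at hgt
      exact (hcol j hli).not_gt hgt
    exact ⟨hlo, by simp only; omega, by simp only; omega⟩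

theorem exists_hits_of_inSearchRegion (hrow : ∀ i, Monotone (M i))
    (hcol : ∀ j, Monotone fun i => M i j) {i : Fin m} {j : Fin n} (hij : M i j = x) {t₀ : ℕ}
    (hreg : InSearchRegion (p t₀) i j) : ∃ t, Hits M x (p t) := by
  by_contra! hmiss
  have hrun : ∀ k : ℕ, InSearchRegion (p (t₀ + k)) i j ∧
      ((p (t₀ + k)).1 : ℤ) - (p (t₀ + k)).2 = (p t₀).1 - (p t₀).2 + k := by
    intro k
    induction k with
    | zero => simpa using hreg
    | succ k ih =>
      obtain ⟨⟨hlo, hhi, hhi_lt⟩, hdiff⟩ := ih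
      rw [← add_assoc,
        fst_sub_snd_succ p hstep (hlo.trans_lt i.isLt) (by omega) (by omega), hdiff]
      exact ⟨inSearchRegion_succ p hstep hrow hcol hij ⟨hlo, hhi, hhi_lt⟩ (hmiss _),
        by push_cast; ring⟩
  -- `lo - hi` would exceed `m`, yet it stays below `i - j < m` inside the region.
  obtain ⟨⟨hlo, hhi, -⟩, hdiff⟩ := hrun (m + n)
  obtain ⟨-, -, hhi₀⟩ := hreg
  have := i.isLt
  push_cast at hdiff
  omega

end StaircaseSearch

theorem staircase_search_finds_iff_general (n : ℕ)
    (M : Fin n → Fin n → ℝ)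
    (hrow : ∀ i, StrictMono (M i)) (hcol : ∀ j, StrictMono (fun i => M i j))
    (x : ℝ) (p : ℕ → ℕ × ℤ)
    (h0 : p 0 = (0, (n : ℤ) - 1))
    (hstep : ∀ t, (h1 : (p t).1 < n) → 0 ≤ (p t).2 → (h3 : (p t).2.toNat < n) →
      p (t + 1) =
        if M ⟨(p t).1, h1⟩ ⟨(p t).2.toNat, h3⟩ < x
        then ((p t).1 + 1, (p t).2)
        else ((p t).1, (p t).2 - 1)) :
    (∃ t, ∃ (h1 : (p t).1 < n) (h3 : (p t).2.toNat < n),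
        0 ≤ (p t).2 ∧ M ⟨(p t).1, h1⟩ ⟨(p t).2.toNat, h3⟩ = x) ↔
      ∃ i j, M i j = x := by
  refine ⟨fun ⟨_, _, _, _, hx⟩ => ⟨_, _, hx⟩, fun ⟨i, j, hij⟩ => ?_⟩
  have hstart : StaircaseSearch.InSearchRegion (p 0) i j := by
    rw [h0]
    exact ⟨Nat.zero_le _, by omega, by omega⟩
  exact StaircaseSearch.exists_hits_of_inSearchRegion p hstep (fun i => (hrow i).monotone)
    (fun j => (hcol j).monotone) hij hstart

/-- Correctness of the two-pointer staircase search: the search trajectory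
`p : ℕ → ℕ × ℤ` (pair `(lo, hi)`), started at `(0, n-1)`, moving down when
`M(lo,hi) < x` and left otherwise (in particular after reporting `M(lo,hi) = x`),
visits a cell of value `x` iff `x` occurs in the matrix `M`, provided `M` has
strictly increasing rows and columns. -/
theorem staircase_search_finds_iff (n : ℕ) (hn : 0 < n)
    (M : Fin n → Fin n → ℝ)
    (hrow : ∀ i, StrictMono (M i)) (hcol : ∀ j, StrictMono (fun i => M i j))
    (x : ℝ) (p : ℕ → ℕ × ℤ)
    (h0 : p 0 = (0, (n : ℤ) - 1))
    (hstep : ∀ t, (h1 : (p t).1 < n) → 0 ≤ (p t).2 → (h3 : (p t).2.toNat < n) →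
      p (t + 1) =
        if M ⟨(p t).1, h1⟩ ⟨(p t).2.toNat, h3⟩ < x
        then ((p t).1 + 1, (p t).2)
        else ((p t).1, (p t).2 - 1)) :
    (∃ t, ∃ (h1 : (p t).1 < n) (h3 : (p t).2.toNat < n),
        0 ≤ (p t).2 ∧ M ⟨(p t).1, h1⟩ ⟨(p t).2.toNat, h3⟩ = x) ↔
      ∃ i j, M i j = x :=
  staircase_search_finds_iff_general n M hrow hcol x p h0 hstep
end

section
/- In a matrix M with strictly increasing rows, two valid partial contours associated with values x ≤ y satisfy: the partial contour of x lies weakly to the left of the partial contour of y in every common row, and consequently the set of cells strictly between them (excluding the partial contour of x, including the partial contour of y) is exactly the set of positions (i,j) with x ≤ M(i,j) < y. -/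
/-!
In a monotone row `f`, the contour cell of `v` is the last column with `f b < v`:
it exists as soon as some entry is below `v` (the row is finite), and a column `j` lies to
its right exactly when `v ≤ f j`. Both descriptions of the cells between two contours then
reduce to `x ≤ f j` and `f j < y`.
-/

namespace PartialContour

variable {α β : Type*} [LinearOrder α] [LinearOrder β]

def IsCell (f : α → β) (v : β) (b : α) : Prop :=
  f b < v ∧ ∀ b', b < b' → v ≤ f b'

theorem IsCell.le_of_le {f : α → β} {x y : β} {a b : α} (ha : IsCell f x a) (hb : IsCell f y b)
    (hxy : x ≤ y) : a ≤ b := by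
  by_contra! hba
  exact (hb.2 a hba).not_gt (ha.1.trans_le hxy)

theorem exists_isCell_ge [Finite α] {f : α → β} {v : β} {j : α} (hj : f j < v) :
    ∃ b, IsCell f v b ∧ j ≤ b := by
  obtain ⟨b, hb, hmax⟩ := Set.exists_max_image {b | f b < v} id (Set.toFinite _) ⟨j, hj⟩
  exact ⟨b, ⟨hb, fun b' hbb' => not_lt.mp fun h => (hmax b' h).not_gt hbb'⟩, hmax j hj⟩

theorem exists_isCell_ge_iff [Finite α] {f : α → β} (hf : Monotone f) {v : β} {j : α} :
    (∃ b, IsCell f v b ∧ j ≤ b) ↔ f j < v :=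
  ⟨fun ⟨_, hb, hjb⟩ => (hf hjb).trans_lt hb.1, exists_isCell_ge⟩

theorem forall_isCell_lt_iff [Finite α] {f : α → β} (hf : Monotone f) {v : β} {j : α} :
    (∀ b, IsCell f v b → b < j) ↔ v ≤ f j := by
  constructor
  · intro h
    by_contra! hj
    obtain ⟨b, hb, hjb⟩ := exists_isCell_ge hj
    exact (h b hb).not_ge hjb
  · intro hj b hb
    by_contra! hjb
    exact (hf hjb).not_gt (hb.1.trans_le hj)

end PartialContour

theorem partial_contours_between_general (g : ℕ) (M : Fin g → Fin g → ℝ)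
    (hrow : ∀ i, StrictMono (M i))
    (x y : ℝ) (hxy : x ≤ y) :
    (∀ (i bx by' : Fin g),
        (M i bx < x ∧ ∀ b', bx < b' → x ≤ M i b') →
        (M i by' < y ∧ ∀ b', by' < b' → y ≤ M i b') →
        bx ≤ by') ∧
    (∀ (i j : Fin g),
        (x ≤ M i j ∧ M i j < y) ↔
          ((∀ bx : Fin g, (M i bx < x ∧ ∀ b', bx < b' → x ≤ M i b') → bx < j) ∧
           (∃ by' : Fin g, (M i by' < y ∧ ∀ b', by' < b' → y ≤ M i b') ∧ j ≤ by'))) :=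
  ⟨fun _ _ _ hx hy => PartialContour.IsCell.le_of_le hx hy hxy, fun i _ =>
    (and_congr (PartialContour.forall_isCell_lt_iff (hrow i).monotone)
      (PartialContour.exists_isCell_ge_iff (hrow i).monotone)).symm⟩

/-- Partial contours of values `x ≤ y` in a matrix with strictly increasing rows and
columns: the partial contour of `x` lies weakly to the left of that of `y` in every
common row (where the partial contour of `v` consists, for each row `i`, of the cell
`(i, b)` with `b` the largest column such that `M i b' < v` for all `b' ≤ b`), and the
cells between them (excluding the contour of `x`, including that of `y`) are exactly
the positions `(i, j)` with `x ≤ M i j < y`. -/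
theorem partial_contours_between (g : ℕ) (M : Fin g → Fin g → ℝ)
    (hrow : ∀ i, StrictMono (M i)) (hcol : ∀ j, StrictMono (fun i => M i j))
    (x y : ℝ) (hxy : x ≤ y) :
    (∀ (i bx by' : Fin g),
        (M i bx < x ∧ ∀ b', bx < b' → x ≤ M i b') →
        (M i by' < y ∧ ∀ b', by' < b' → y ≤ M i b') →
        bx ≤ by') ∧
    (∀ (i j : Fin g),
        (x ≤ M i j ∧ M i j < y) ↔
          ((∀ bx : Fin g, (M i bx < x ∧ ∀ b', bx < b' → x ≤ M i b') → bx < j) ∧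
           (∃ by' : Fin g, (M i by' < y ∧ ∀ b', by' < b' → y ≤ M i b') ∧ j ≤ by'))) :=
  partial_contours_between_general g M hrow x y hxy
end

section
/- Given sorted lists A and B each of length n partitioned into consecutive blocks of size g, the staircase search over the block matrix (Steps 4.1–4.3 of Grønlund–Pettie, advancing by whole blocks using the comparison max(A_lo) + min(B_hi) vs −c) visits at most 2⌈n/g⌉ blocks per searched element c, and every cell (i,j) of the full n×n sum matrix with A(i) + B(j) = −c lies inside a visited block. -/
/-!
Along the walk `lo - hi` grows by exactly one per step, so the walk leaves the `nb × nb` grid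
of blocks within `2 nb` steps. For a solution `A i + B j = -c` in block `(a, b)`, strict
monotonicity forces the rule to move right on row `b` left of `a`, and down on column `a`
above `b`. Hence the walk can never leave the rectangle `[0, a] × [b, nb)` except through
`(a, b)`; since it cannot stay there longer than `a + nb - 1 - b` steps, it meets `(a, b)`.
-/

namespace Staircase

def Active (nb : ℕ) (p : ℕ × ℤ) : Prop := p.1 < nb ∧ 0 ≤ p.2

def IsWalk (nb : ℕ) (down : ℕ → ℤ → Prop) [DecidableRel down] (q : ℕ → ℕ × ℤ) : Prop :=
  q 0 = (0, (nb : ℤ) - 1) ∧ ∀ t, Active nb (q t) →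
    q (t + 1) = if down (q t).1 (q t).2 then ((q t).1, (q t).2 - 1) else ((q t).1 + 1, (q t).2)

variable {nb : ℕ} {down : ℕ → ℤ → Prop} [DecidableRel down] {q : ℕ → ℕ × ℤ}

theorem IsWalk.fst_sub_snd_eq (hq : IsWalk nb down q) {t : ℕ}
    (ht : ∀ s < t, Active nb (q s)) :
    (q t).1 ≤ nb ∧ -1 ≤ (q t).2 ∧ ((q t).1 : ℤ) - (q t).2 = t + 1 - nb := by
  induction t with
  | zero => simp only [hq.1]; omega
  | succ t ih =>
    obtain ⟨hlo, hhi, hdiff⟩ := ih fun s hs => ht s (by omega)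
    obtain ⟨hlo', hhi'⟩ := ht t (by omega)
    rw [hq.2 t ⟨hlo', hhi'⟩]
    split_ifs <;> · simp only; push_cast; omega

theorem IsWalk.exists_exit_le (hq : IsWalk nb down q) :
    ∃ t ≤ 2 * nb, (q t).1 = nb ∨ (q t).2 = -1 := by
  classical
  have hexit : ∃ t, ¬ Active nb (q t) := by
    by_contra! hall
    have hdiff := hq.fst_sub_snd_eq (t := 2 * nb) fun s _ => hall s
    have hlast := hall (2 * nb)
    unfold Active at hlast
    omega
  obtain ⟨t, hinactive, hbefore⟩ : ∃ t, ¬ Active nb (q t) ∧ ∀ s < t, Active nb (q s) :=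
    ⟨Nat.find hexit, Nat.find_spec hexit, fun s hs => not_not.1 (Nat.find_min hexit hs)⟩
  have hdiff := hq.fst_sub_snd_eq hbefore
  unfold Active at hinactive
  exact ⟨t, by omega, by omega⟩

section Target

variable {a b : ℕ} (right_on_row : ∀ lo < a, ¬ down lo b)
  (down_on_col : ∀ k : ℕ, b < k → k < nb → down a k)
include right_on_row down_on_col

theorem IsWalk.mem_rect_succ (hq : IsWalk nb down q) (ha : a < nb) {t : ℕ}
    (hlo : (q t).1 ≤ a) (hhi : b ≤ (q t).2) (hhi' : (q t).2 < nb) (hne : q t ≠ (a, (b : ℤ))) :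
    (q (t + 1)).1 ≤ a ∧ b ≤ (q (t + 1)).2 ∧ (q (t + 1)).2 < nb := by
  rw [hq.2 t ⟨by omega, by omega⟩]
  split_ifs with hdown
  · have hhi_ne : (q t).2 ≠ b := fun h =>
      right_on_row _ (lt_of_le_of_ne hlo fun h' => hne (Prod.ext h' h)) (h ▸ hdown)
    simp only
    omega
  · have hlo_ne : (q t).1 ≠ a := fun h => by
      have hb_lt : (b : ℤ) < (q t).2 := lt_of_le_of_ne hhi fun h' => hne (Prod.ext h h'.symm)
      lift (q t).2 to ℕ using (by omega) with k
      exact hdown (h ▸ down_on_col k (by omega) (by omega))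
    simp only
    omega

theorem IsWalk.exists_eq (hq : IsWalk nb down q)
    (ha : a < nb) (hb : b < nb) : ∃ t, q t = (a, (b : ℤ)) := by
  by_contra! hne
  have hrect : ∀ t, (q t).1 ≤ a ∧ b ≤ (q t).2 ∧ (q t).2 < nb := by
    intro t
    induction t with
    | zero => simp only [hq.1]; omega
    | succ t ih =>
      exact hq.mem_rect_succ right_on_row down_on_col ha ih.1 ih.2.1 ih.2.2 (hne t)
  have hdiff := hq.fst_sub_snd_eq (t := a + nb - 1 - b) fun s _ =>
    ⟨(hrect s).1.trans_lt ha, (Int.natCast_nonneg b).trans (hrect s).2.1⟩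
  have := hrect (a + nb - 1 - b)
  exact hne (a + nb - 1 - b) (Prod.ext (by omega) (by omega))

end Target

end Staircase

section Blocks

variable {n : ℕ} (hn : 0 < n) (g : ℕ)

def blockLast (k : ℕ) : Fin n := ⟨min (k * g + g - 1) (n - 1), by omega⟩

def blockFirst (k : ℕ) : Fin n := ⟨min (k * g) (n - 1), by omega⟩

theorem blockFirst_le (j : Fin n) : blockFirst hn g (j / g) ≤ j := by
  have := Nat.div_mul_le_self j g
  change min (j / g * g) (n - 1) ≤ j.val
  omega

variable {g}

theorem blockLast_lt (hg : 0 < g) {i : Fin n} {k : ℕ} (hk : k < i / g) :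
    blockLast hn g k < i := by
  have := (Nat.le_div_iff_mul_le hg).1 hk
  change min (k * g + g - 1) (n - 1) < i.val
  rw [Nat.succ_mul] at this
  omega

theorem le_blockLast (hg : 0 < g) (i : Fin n) : i ≤ blockLast hn g (i / g) := by
  have := Nat.lt_div_mul_add (a := i.val) hg
  change i.val ≤ min (i / g * g + g - 1) (n - 1)
  omega

theorem lt_blockFirst (hg : 0 < g) {j : Fin n} {k : ℕ} (hk : j / g < k) (hkn : k * g < n) :
    j < blockFirst hn g k := by
  have := Nat.lt_div_mul_add (a := j.val) hg
  have := Nat.mul_le_mul_right g hk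
  change j.val < min (k * g) (n - 1)
  rw [Nat.succ_mul] at this
  omega

end Blocks

theorem lt_add_sub_one_div_iff {n g k : ℕ} (hg : 0 < g) : k < (n + g - 1) / g ↔ k * g < n := by
  rw [← Nat.ceilDiv_eq_add_pred_div, ← not_le, ceilDiv_le_iff_le_mul hg, not_le, mul_comm]

/-- The block-level staircase search of Grønlund–Pettie (Steps 4.1–4.3): with `A, B`
sorted and partitioned into `⌈n/g⌉` consecutive blocks of at most `g` elements, the
search over block indices `(lo, hi)` starting at `(0, ⌈n/g⌉ - 1)` — decrementing `hi`
when `max(A_lo) + min(B_hi) > -c` and incrementing `lo` otherwise — terminates after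
visiting at most `2⌈n/g⌉` blocks, and every cell `(i, j)` of the sum matrix with
`A i + B j = -c` lies inside some visited block. -/
theorem block_staircase_search (n g : ℕ) (hg : 0 < g) (hn : 0 < n)
    (A B : Fin n → ℝ) (hA : StrictMono A) (hB : StrictMono B) (c : ℝ)
    (nb : ℕ) (hnb : nb = (n + g - 1) / g)
    (q : ℕ → ℕ × ℤ)
    (h0 : q 0 = (0, (nb : ℤ) - 1))
    (hstep : ∀ t, (q t).1 < nb → 0 ≤ (q t).2 →
      q (t + 1) =
        if A ⟨min ((q t).1 * g + g - 1) (n - 1), by omega⟩ +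
             B ⟨min ((q t).2.toNat * g) (n - 1), by omega⟩ > -c
        then ((q t).1, (q t).2 - 1)
        else ((q t).1 + 1, (q t).2)) :
    (∃ t ≤ 2 * nb, (q t).1 = nb ∨ (q t).2 = -1) ∧
    (∀ i j : Fin n, A i + B j = -c →
      ∃ t, (q t).1 < nb ∧ 0 ≤ (q t).2 ∧
        (q t).1 = i.val / g ∧ (q t).2 = ((j.val / g : ℕ) : ℤ)) := by
  have hq : Staircase.IsWalk nb
      (fun lo hi => A (blockLast hn g lo) + B (blockFirst hn g hi.toNat) > -c) q :=
    ⟨h0, fun t ht => hstep t ht.1 ht.2⟩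
  refine ⟨hq.exists_exit_le, fun i j hij => ?_⟩
  have hblock : ∀ k : Fin n, k / g < nb := fun k =>
    hnb ▸ (lt_add_sub_one_div_iff hg).2 ((Nat.div_mul_le_self k g).trans_lt k.isLt)
  obtain ⟨t, ht⟩ := hq.exists_eq (a := i / g) (b := j / g)
    (fun lo hlo => by
      have hA_lt := hA (blockLast_lt hn hg hlo)
      have hB_le := hB.monotone (blockFirst_le hn g j)
      simp only [Int.toNat_natCast]
      linarith)
    (fun k hjk hk => by
      have hA_le := hA.monotone (le_blockLast hn hg i)
      have hB_lt := hB (lt_blockFirst hn hg hjk ((lt_add_sub_one_div_iff hg).1 (hnb ▸ hk)))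
      simp only [Int.toNat_natCast]
      linarith)
    (hblock i) (hblock j)
  refine ⟨t, ?_⟩
  rw [ht]
  exact ⟨hblock i, Int.natCast_nonneg _, rfl, rfl⟩
end
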